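/- If R is an invertible matrix, then as λ → ∞, the scaled regularized least-squares solution √(1+λ²) (SᵀS + λ RᵀR)⁻¹ Sᵀ v converges to (RᵀR)⁻¹ Sᵀ v. -/

import Mathlib

open Matrix Filter Topology

/- Since `λ (SᵀS + λ RᵀR)⁻¹ = (λ⁻¹ SᵀS + RᵀR)⁻¹` and matrix inversion is continuous at the
invertible matrix `RᵀR`, this tends to `(RᵀR)⁻¹`; the remaining scalar factor
`√(1 + λ²) / λ` tends to `1`. -/

namespace Matrix

variable {ι 𝕜 : Type*} [Fintype ι] [DecidableEq ι]

theorem inv_smul_of_ne_zero [Field 𝕜] (A : Matrix ι ι 𝕜) {k : 𝕜} (hk : k ≠ 0) :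
    (k • A)⁻¹ = k⁻¹ • A⁻¹ := by
  by_cases hA : IsUnit A.det
  · exact inv_smul' A (Units.mk0 k hk) hA
  · have hkA : ¬IsUnit (k • A).det := by
      simpa [det_smul, isUnit_iff_ne_zero, hk] using hA
    rw [nonsing_inv_apply_not_isUnit _ hA, nonsing_inv_apply_not_isUnit _ hkA, smul_zero]

theorem tendsto_smul_inv_add_smul_atTop (A : Matrix ι ι ℝ) {B : Matrix ι ι ℝ}
    (hB : IsUnit B.det) : Tendsto (fun t : ℝ => t • (A + t • B)⁻¹) atTop (𝓝 B⁻¹) := by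
  have hinv : ContinuousAt Inv.inv B :=
    continuousAt_matrix_inv B (by rw [Ring.inverse_eq_inv']; exact continuousAt_inv₀ hB.ne_zero)
  have hperturb : Tendsto (fun t : ℝ => t⁻¹ • A + B) atTop (𝓝 B) := by
    simpa using ((tendsto_inv_atTop_zero (𝕜 := ℝ)).smul_const A).add_const B
  refine (hinv.tendsto.comp hperturb).congr' ?_
  filter_upwards [eventually_ne_atTop 0] with t ht
  have hfactor : A + t • B = t • (t⁻¹ • A + B) := by
    rw [smul_add, smul_smul, mul_inv_cancel₀ ht, one_smul, add_comm]
  rw [Function.comp_apply, hfactor, inv_smul_of_ne_zero _ ht, smul_smul, mul_inv_cancel₀ ht,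
    one_smul]

end Matrix

theorem Real.tendsto_sqrt_one_add_sq_mul_inv_atTop :
    Tendsto (fun x : ℝ => √(1 + x ^ 2) * x⁻¹) atTop (𝓝 1) := by
  have hlim : Tendsto (fun x : ℝ => √(x⁻¹ ^ 2 + 1)) atTop (𝓝 1) := by
    simpa using ((tendsto_inv_atTop_zero.pow 2).add_const 1).sqrt
  refine hlim.congr' ?_
  filter_upwards [eventually_gt_atTop 0] with x hx
  rw [show x⁻¹ ^ 2 + 1 = (1 + x ^ 2) * x⁻¹ ^ 2 by field_simp, Real.sqrt_mul (by positivity),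
    Real.sqrt_sq (by positivity)]

/-- If `R` is invertible, then as `λ → ∞`, the scaled regularized
least-squares solution `√(1+λ²) (SᵀS + λ RᵀR)⁻¹ Sᵀ v` converges to `(RᵀR)⁻¹ Sᵀ v`. -/
theorem fer_limit (m n : ℕ) (S : Matrix (Fin m) (Fin n) ℝ)
    (R : Matrix (Fin n) (Fin n) ℝ) (hR : IsUnit R.det) (v : Fin m → ℝ) :
    Tendsto
      (fun lam : ℝ =>
        Real.sqrt (1 + lam ^ 2) •
          ((Sᵀ * S + lam • (Rᵀ * R))⁻¹.mulVec (Sᵀ.mulVec v)))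
      atTop
      (nhds ((Rᵀ * R)⁻¹.mulVec (Sᵀ.mulVec v))) := by
  have hRR : IsUnit (Rᵀ * R).det := by
    rw [det_mul, det_transpose]
    exact hR.mul hR
  have hvec := (((continuous_id.matrix_mulVec continuous_const).tendsto _).comp
    (tendsto_smul_inv_add_smul_atTop (Sᵀ * S) hRR) :
    Tendsto (fun lam : ℝ => (lam • (Sᵀ * S + lam • (Rᵀ * R))⁻¹) *ᵥ Sᵀ *ᵥ v) atTop _)
  have hlim := Real.tendsto_sqrt_one_add_sq_mul_inv_atTop.smul hvec
  rw [one_smul] at hlim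
  refine hlim.congr' ?_
  filter_upwards [eventually_ne_atTop 0] with lam hlam
  simp only [Function.comp_apply, id, smul_mulVec, smul_smul, mul_assoc, inv_mul_cancel₀ hlam,
    mul_one]
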